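/- arXiv:2505.21166 — 2 statements merged into one kernel-verified Lean document; each statement's English description precedes it below -/
import Mathlib

section
/- Let v₁, …, v_n be pairwise distinct complex numbers, let z₁, …, z_n be complex numbers such that z_k ∉ {v₁,…,v_n} for k ≠ l, the z_k (k ≠ l) are pairwise distinct, and v_j ≠ z_k for all k ≠ l (j, l fixed). Let Y₁, …, Y_n : ℂ → ℂ be continuous at v_j. With τ(z, v) = det(Ω)/Δ(z) for Ω_{ik} = Y_i(z_k)/(z_k − v_i), and Ξ_l(t, ẑ_l) = ∏_{r<l}(t − z_r) ∏_{r>l}(z_r − t), one has: as the variable z_l = t tends to v_j (t ≠ v_j, t not equal to any other z_k), (t − v_j)·τ(z, v) tends to ((−1)^{j+l} Y_j(v_j)/Ξ_l(v_j, ẑ_l)) · τ̃_j(ẑ_l, v), where τ̃_j(ẑ_l, v) = det(Ω̂_{j,l})/Δ(ẑ_l) and Ω̂_{j,l} deletes row j and column l of Ω. Equivalently, τ̃_j(ẑ_l, v) = (Ξ_l(v_j, ẑ_l)/Y_j(v_j)) · Res_{z_l=v_j} τ(z, v) when Y_j(v_j) ≠ 0. -/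
open Topology Filter

/-- The Vandermonde determinant `Δ(w) = ∏_{j>k} (w_j − w_k)`. -/
def vand {m : ℕ} (w : Fin m → ℂ) : ℂ :=
  ∏ j : Fin m, ∏ k ∈ Finset.Iio j, (w j - w k)

lemma vand_pairs {m : ℕ} (w : Fin m → ℂ) :
    vand w = ∏ p ∈ Finset.univ.filter (fun p : Fin m × Fin m => p.2 < p.1), (w p.1 - w p.2) := by
  rw [vand, Finset.prod_filter, ← Finset.univ_product_univ, Finset.prod_product]
  refine Finset.prod_congr rfl fun j _ => ?_
  have h : Finset.Iio j = Finset.univ.filter (· < j) := by ext k; simp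
  rw [h, Finset.prod_filter]

lemma vand_update {n : ℕ} (z : Fin (n + 1) → ℂ) (l : Fin (n + 1)) (t : ℂ) :
    vand (Function.update z l t) =
      ((∏ r ∈ Finset.Iio l, (t - z r)) * ∏ r ∈ Finset.Ioi l, (z r - t)) *
        vand (z ∘ l.succAbove) := by
  set w := Function.update z l t with hw
  rw [vand_pairs w, vand_pairs (z ∘ l.succAbove)]
  rw [← Finset.prod_filter_mul_prod_filter_not
    (Finset.univ.filter fun p : Fin (n + 1) × Fin (n + 1) => p.2 < p.1) (fun p => p.1 = l)]
  rw [← Finset.prod_filter_mul_prod_filter_not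
    ((Finset.univ.filter fun p : Fin (n + 1) × Fin (n + 1) => p.2 < p.1).filter
      (fun p => ¬ p.1 = l)) (fun p => p.2 = l)]
  rw [← mul_assoc]
  congr 1
  · congr 1
    · -- pairs with p.1 = l ↦ Iio l
      refine Finset.prod_bij (fun p _ => p.2) ?_ ?_ ?_ ?_
      · intro p hp
        simp only [Finset.mem_filter, Finset.mem_univ, true_and] at hp
        simp [Finset.mem_Iio, hp.2 ▸ hp.1]
      · intro p hp q hq hpq
        simp only [Finset.mem_filter, Finset.mem_univ, true_and] at hp hq
        exact Prod.ext (hp.2.trans hq.2.symm) hpq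
      · intro r hr
        simp only [Finset.mem_Iio] at hr
        exact ⟨(l, r), by simp [hr], rfl⟩
      · intro p hp
        simp only [Finset.mem_filter, Finset.mem_univ, true_and] at hp
        have h2 : p.2 ≠ l := ne_of_lt (hp.2 ▸ hp.1)
        rw [hp.2, hw, Function.update_self, Function.update_of_ne h2]
    · -- pairs with p.1 ≠ l, p.2 = l ↦ Ioi l
      refine Finset.prod_bij (fun p _ => p.1) ?_ ?_ ?_ ?_
      · intro p hp
        simp only [Finset.mem_filter, Finset.mem_univ, true_and] at hp
        simp [Finset.mem_Ioi, hp.2 ▸ hp.1.1]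
      · intro p hp q hq hpq
        simp only [Finset.mem_filter, Finset.mem_univ, true_and] at hp hq
        exact Prod.ext hpq (hp.2.trans hq.2.symm)
      · intro r hr
        simp only [Finset.mem_Ioi] at hr
        exact ⟨(r, l), by simp [hr, ne_of_gt hr], rfl⟩
      · intro p hp
        simp only [Finset.mem_filter, Finset.mem_univ, true_and] at hp
        rw [hp.2, hw, Function.update_self, Function.update_of_ne hp.1.2]
  · -- pairs avoiding l ↦ vand of z ∘ succAbove
    refine (Finset.prod_bij
      (fun (q : Fin n × Fin n) _ => ((l.succAbove q.1, l.succAbove q.2) :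
        Fin (n + 1) × Fin (n + 1))) ?_ ?_ ?_ ?_).symm
    · intro q hq
      simp only [Finset.mem_filter, Finset.mem_univ, true_and] at hq ⊢
      exact ⟨⟨Fin.succAbove_lt_succAbove_iff.mpr hq, Fin.succAbove_ne l q.1⟩,
        Fin.succAbove_ne l q.2⟩
    · intro q hq q' hq' h
      have h1 := congrArg Prod.fst h
      have h2 := congrArg Prod.snd h
      exact Prod.ext (Fin.succAbove_right_injective h1) (Fin.succAbove_right_injective h2)
    · intro p hp
      simp only [Finset.mem_filter, Finset.mem_univ, true_and] at hp
      obtain ⟨a, ha⟩ := Fin.exists_succAbove_eq hp.1.2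
      obtain ⟨b, hb⟩ := Fin.exists_succAbove_eq hp.2
      refine ⟨(a, b), ?_, by simp [ha, hb]⟩
      simp only [Finset.mem_filter, Finset.mem_univ, true_and]
      rw [← Fin.succAbove_lt_succAbove_iff (p := l), ha, hb]
      exact hp.1.1
    · intro q hq
      simp only [hw, Function.comp_apply,
        Function.update_of_ne (Fin.succAbove_ne l q.1),
        Function.update_of_ne (Fin.succAbove_ne l q.2)]

/-- Residue of the normalized Slavnov product `τ(z,v) = det Ω / Δ(z)` at
`z_l = v_j`: as `t → v_j` (with `t ≠ v_j` and `t` distinct from the other `z_k`),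
`(t − v_j)·τ → ((−1)^{j+l} Y_j(v_j)/Ξ_l(v_j, ẑ_l)) · τ̃_j(ẑ_l, v)`. -/
theorem residue_slavnov_tau (n : ℕ) (z v : Fin (n + 1) → ℂ) (hv : Function.Injective v)
    (j l : Fin (n + 1))
    (hz : ∀ k k' : Fin (n + 1), k ≠ l → k' ≠ l → z k = z k' → k = k')
    (hzv : ∀ k i : Fin (n + 1), k ≠ l → z k ≠ v i)
    (Y : Fin (n + 1) → ℂ → ℂ) (hY : ∀ i : Fin (n + 1), ContinuousAt (Y i) (v j)) :
    Tendsto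
      (fun t : ℂ => (t - v j) *
        ((Matrix.of fun i k : Fin (n + 1) =>
            Y i (Function.update z l t k) / (Function.update z l t k - v i)).det
          / vand (Function.update z l t)))
      (𝓝[{t : ℂ | t ≠ v j ∧ ∀ k : Fin (n + 1), k ≠ l → t ≠ z k}] (v j))
      (𝓝 (((-1 : ℂ) ^ ((j : ℕ) + (l : ℕ)) * Y j (v j) /
            ((∏ r ∈ Finset.Iio l, (v j - z r)) * ∏ r ∈ Finset.Ioi l, (z r - v j))) *
          (((Matrix.of fun i k : Fin (n + 1) =>
                Y i (z k) / (z k - v i)).submatrix j.succAbove l.succAbove).det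
            / vand (z ∘ l.succAbove)))) := by
  set S : Set ℂ := {t : ℂ | t ≠ v j ∧ ∀ k : Fin (n + 1), k ≠ l → t ≠ z k} with hS
  set M : Fin (n + 1) → ℂ := fun i =>
    ((Matrix.of fun i k : Fin (n + 1) =>
      Y i (z k) / (z k - v i)).submatrix i.succAbove l.succAbove).det with hM
  -- determinant expansion along column l
  have hdet : ∀ t : ℂ,
      (Matrix.of fun i k : Fin (n + 1) =>
          Y i (Function.update z l t k) / (Function.update z l t k - v i)).det
        = ∑ i : Fin (n + 1), (-1 : ℂ) ^ ((i : ℕ) + (l : ℕ)) *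
            (Y i t / (t - v i)) * M i := by
    intro t
    rw [Matrix.det_succ_column _ l]
    refine Finset.sum_congr rfl fun i _ => ?_
    congr 1
    · congr 1
      simp [Function.update_self]
    · congr 1
      ext a b
      simp [Matrix.submatrix_apply, Function.update_of_ne (Fin.succAbove_ne l b)]
  -- numerator tendsto
  have hnum : Tendsto
      (fun t : ℂ => (t - v j) *
        (Matrix.of fun i k : Fin (n + 1) =>
          Y i (Function.update z l t k) / (Function.update z l t k - v i)).det)
      (𝓝[S] (v j))
      (𝓝 ((-1 : ℂ) ^ ((j : ℕ) + (l : ℕ)) * Y j (v j) * M j)) := by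
    have heq : ∀ t : ℂ, (t - v j) *
        (Matrix.of fun i k : Fin (n + 1) =>
          Y i (Function.update z l t k) / (Function.update z l t k - v i)).det
        = ∑ i : Fin (n + 1), (t - v j) * ((-1 : ℂ) ^ ((i : ℕ) + (l : ℕ)) *
            (Y i t / (t - v i)) * M i) := by
      intro t; rw [hdet t, Finset.mul_sum]
    simp only [heq]
    have hlim : (-1 : ℂ) ^ ((j : ℕ) + (l : ℕ)) * Y j (v j) * M j
        = ∑ i : Fin (n + 1), (if i = j then
            (-1 : ℂ) ^ ((j : ℕ) + (l : ℕ)) * Y j (v j) * M j else 0) := by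
      simp
    rw [hlim]
    refine tendsto_finset_sum _ fun i _ => ?_
    by_cases hij : i = j
    · subst hij
      simp only [if_pos rfl]
      have h1 : Tendsto (fun t : ℂ => (-1 : ℂ) ^ ((i : ℕ) + (l : ℕ)) * Y i t * M i)
          (𝓝[S] (v i)) (𝓝 ((-1 : ℂ) ^ ((i : ℕ) + (l : ℕ)) * Y i (v i) * M i)) := by
        exact (((continuousAt_const.mul (hY i)).mul continuousAt_const)).continuousWithinAt
      refine h1.congr' ?_
      filter_upwards [self_mem_nhdsWithin] with t ht
      have htne : t - v i ≠ 0 := sub_ne_zero.mpr ht.1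
      field_simp
    · simp only [if_neg hij]
      have h1 : Tendsto (fun t : ℂ => (t - v j) * ((-1 : ℂ) ^ ((i : ℕ) + (l : ℕ)) *
          (Y i t / (t - v i)) * M i)) (𝓝 (v j))
          (𝓝 ((v j - v j) * ((-1 : ℂ) ^ ((i : ℕ) + (l : ℕ)) *
            (Y i (v j) / (v j - v i)) * M i))) := by
        have hvi : v j - v i ≠ 0 := sub_ne_zero.mpr (fun h => hij (hv h).symm)
        exact ((continuousAt_id.sub continuousAt_const).mul
          ((continuousAt_const.mul ((hY i).div
            (continuousAt_id.sub continuousAt_const) hvi)).mul continuousAt_const))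
      simpa using h1.mono_left nhdsWithin_le_nhds
  -- denominator tendsto
  have hXi : (∏ r ∈ Finset.Iio l, (v j - z r)) * ∏ r ∈ Finset.Ioi l, (z r - v j) ≠ 0 := by
    apply mul_ne_zero
    · rw [Finset.prod_ne_zero_iff]
      intro r hr
      exact sub_ne_zero.mpr fun h => hzv r j (ne_of_lt (Finset.mem_Iio.mp hr)) h.symm
    · rw [Finset.prod_ne_zero_iff]
      intro r hr
      exact sub_ne_zero.mpr (hzv r j (ne_of_gt (Finset.mem_Ioi.mp hr)))
  have hvand : vand (z ∘ l.succAbove) ≠ 0 := by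
    rw [vand]
    rw [Finset.prod_ne_zero_iff]
    intro a _
    rw [Finset.prod_ne_zero_iff]
    intro b hb
    refine sub_ne_zero.mpr fun h => ?_
    have := hz _ _ (Fin.succAbove_ne l a) (Fin.succAbove_ne l b) h
    exact absurd (Fin.succAbove_right_injective this) (ne_of_gt (Finset.mem_Iio.mp hb))
  have hD : ((∏ r ∈ Finset.Iio l, (v j - z r)) * ∏ r ∈ Finset.Ioi l, (z r - v j)) *
      vand (z ∘ l.succAbove) ≠ 0 := mul_ne_zero hXi hvand
  have hden : Tendsto (fun t : ℂ => vand (Function.update z l t)) (𝓝[S] (v j))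
      (𝓝 (((∏ r ∈ Finset.Iio l, (v j - z r)) * ∏ r ∈ Finset.Ioi l, (z r - v j)) *
        vand (z ∘ l.succAbove))) := by
    simp only [vand_update]
    refine Tendsto.mono_left ?_ nhdsWithin_le_nhds
    refine Tendsto.mul (Tendsto.mul ?_ ?_) tendsto_const_nhds
    · exact tendsto_finset_prod _ fun r _ => (continuousAt_id.sub continuousAt_const)
    · exact tendsto_finset_prod _ fun r _ => (continuousAt_const.sub continuousAt_id)
  -- assemble
  have key := hnum.div hden hD
  have : ((-1 : ℂ) ^ ((j : ℕ) + (l : ℕ)) * Y j (v j) *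
      ((Matrix.of fun i k : Fin (n + 1) =>
        Y i (z k) / (z k - v i)).submatrix j.succAbove l.succAbove).det) /
      (((∏ r ∈ Finset.Iio l, (v j - z r)) * ∏ r ∈ Finset.Ioi l, (z r - v j)) *
        vand (z ∘ l.succAbove))
      = ((-1 : ℂ) ^ ((j : ℕ) + (l : ℕ)) * Y j (v j) /
          ((∏ r ∈ Finset.Iio l, (v j - z r)) * ∏ r ∈ Finset.Ioi l, (z r - v j))) *
        (((Matrix.of fun i k : Fin (n + 1) =>
          Y i (z k) / (z k - v i)).submatrix j.succAbove l.succAbove).det /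
          vand (z ∘ l.succAbove)) := by
    rw [div_mul_div_comm]
  rw [← this]
  exact key.congr fun t => mul_div_assoc _ _ _
end

section
/- Let φ₁, …, φ_n : ℂ → ℂ be analytic at a point w ∈ ℂ. Consider the function F(z) = det_{j,k}[φ_j(z_k)] / Δ(z) defined on tuples z = (z₁,…,z_n) with pairwise distinct entries, where Δ(z) = ∏_{j>k}(z_j − z_k). Then, as z tends to the constant tuple (w, …, w) within the set of tuples with pairwise distinct entries, F(z) tends to det_{j,k}[ φ_j^{(k−1)}(w) / (k−1)! ] = W[φ₁, …, φ_n](w) / ∏_{k=1}^{n} (k−1)!. In particular, the homogeneous limit of the alternant ratio exists and is given by the Wronskian of the φ_j (up to the factorial normalization). -/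
/-!
A triangular column operation turns `det[φ_j(z_k)] / Δ(z)` into `det[φ_j[z_0, …, z_k]]`, the
determinant of divided differences, so it suffices that `f[z_0, …, z_m] → f^{(m)}(w) / m!`.
By Hermite's formula `f[z_0, …, z_m] = (2πi)⁻¹ ∮ f(ζ) / ∏_t (ζ - z_t) dζ` over a small circle
around `w`, the divided difference extends continuously to coalescing nodes, and at
`z = (w, …, w)` the integral is Cauchy's formula for the `m`-th derivative.
-/

open Topology Filter

open Finset Lagrange Metric Complex Real

section DividedDifference

variable {F ι : Type*} [Field F] [DecidableEq ι]

/-- The divided difference `f[v_i : i ∈ s] = ∑_{i ∈ s} f(v_i) / ∏_{j ∈ s, j ≠ i} (v_i - v_j)`. -/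
def divDiff (s : Finset ι) (v : ι → F) (f : F → F) : F :=
  ∑ i ∈ s, nodalWeight s v i * f (v i)

theorem sum_nodalWeight_mul_inv_sub {s : Finset ι} {v : ι → F} (hvs : Set.InjOn v s)
    (hs : s.Nonempty) {x : F} (hx : ∀ i ∈ s, x ≠ v i) :
    ∑ i ∈ s, nodalWeight s v i * (x - v i)⁻¹ = ((nodal s v).eval x)⁻¹ := by
  have h := eval_interpolate_not_at_node (1 : ι → F) hx
  simp only [interpolate_one hvs hs, Polynomial.eval_one, Pi.one_apply, mul_one] at h
  exact eq_inv_of_mul_eq_one_right h.symm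

end DividedDifference

theorem det_div_vand_eq_det_divDiff {n : ℕ} (φ : Fin n → ℂ → ℂ) (z : Fin n → ℂ) :
    (Matrix.of fun j k => φ j (z k)).det / vand z =
      (Matrix.of fun j k => divDiff (Iic k) z (φ j)).det := by
  -- `L` is upper triangular with diagonal entries `∏_{t < k} (z_k - z_t)⁻¹`.
  let L : Matrix (Fin n) (Fin n) ℂ :=
    Matrix.of fun i k => if i ≤ k then nodalWeight (Iic k) z i else 0
  have hmul : (Matrix.of fun j k => φ j (z k)) * L =
      Matrix.of fun j k => divDiff (Iic k) z (φ j) := by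
    ext j k
    simp only [L, Matrix.mul_apply, Matrix.of_apply, divDiff, mul_ite, mul_zero]
    rw [← sum_filter]
    exact sum_congr (by ext; simp) fun i _ => mul_comm _ _
  have hL : L.det = (vand z)⁻¹ := by
    have hupper : L.IsUpperTriangular := fun i k hki => if_neg (not_le.2 hki)
    rw [Matrix.det_of_isUpperTriangular hupper, vand, ← prod_inv_distrib]
    refine prod_congr rfl fun k _ => ?_
    simp [L, nodalWeight, Iic_erase]
  rw [div_eq_mul_inv, ← hL, ← Matrix.det_mul, hmul]

theorem continuousOn_circleIntegral {X E : Type*} [TopologicalSpace X] [NormedAddCommGroup E]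
    [NormedSpace ℂ E] {F : X → ℂ → E} {U : Set X} {c : ℂ} {R : ℝ} (hR : 0 ≤ R)
    (hF : ContinuousOn (Function.uncurry F) (U ×ˢ sphere c R)) :
    ContinuousOn (fun x => ∮ ζ in C(c, R), F x ζ) U := by
  rw [continuousOn_iff_continuous_domRestrict]
  have hFc : Continuous fun p : U × ℝ => F p.1 (circleMap c R p.2) :=
    hF.comp_continuous (by fun_prop : Continuous fun p : U × ℝ => (p.1.1, circleMap c R p.2))
      fun p => ⟨p.1.2, circleMap_mem_sphere c hR p.2⟩
  refine intervalIntegral.continuous_parametric_intervalIntegral_of_continuous' ?_ 0 (2 * π)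
  simp only [deriv_circleMap]
  exact (((continuous_circleMap 0 R).comp continuous_snd).mul continuous_const).smul hFc

theorem divDiff_eq_circleIntegral {ι : Type*} [DecidableEq ι] {s : Finset ι} {v : ι → ℂ}
    {f : ℂ → ℂ} {c : ℂ} {R : ℝ} (hf : DifferentiableOn ℂ f (closedBall c R))
    (hvs : Set.InjOn v s) (hs : s.Nonempty) (hv : ∀ i ∈ s, v i ∈ ball c R) :
    divDiff s v f = (2 * π * I)⁻¹ • ∮ ζ in C(c, R), ((nodal s v).eval ζ)⁻¹ • f ζ := by
  have hR : 0 < R := pos_of_mem_ball (hv _ hs.choose_spec)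
  have hζv : ∀ ζ ∈ sphere c R, ∀ i ∈ s, ζ ≠ v i := fun ζ hζ i hi =>
    sphere_disjoint_ball.ne_of_mem hζ (hv i hi)
  -- partial fractions split the kernel into Cauchy kernels `(ζ - v_i)⁻¹`
  have hpf : Set.EqOn (fun ζ => ((nodal s v).eval ζ)⁻¹ • f ζ)
      (fun ζ => ∑ i ∈ s, nodalWeight s v i • ((ζ - v i)⁻¹ • f ζ)) (sphere c R) := by
    intro ζ hζ
    simp only [← sum_nodalWeight_mul_inv_sub hvs hs (hζv ζ hζ), smul_eq_mul, sum_mul, mul_assoc]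
  have hint : ∀ i ∈ s, CircleIntegrable (fun ζ => nodalWeight s v i • ((ζ - v i)⁻¹ • f ζ)) c R :=
    fun i hi => ContinuousOn.circleIntegrable hR.le <| continuousOn_const.fun_smul <|
      ((continuousOn_id.fun_sub continuousOn_const).inv₀ fun ζ hζ =>
        sub_ne_zero.2 (hζv ζ hζ i hi)).fun_smul (hf.continuousOn.mono sphere_subset_closedBall)
  rw [circleIntegral.integral_congr hR.le hpf, circleIntegral.integral_fun_sum hint, smul_sum,
    divDiff]
  refine sum_congr rfl fun i hi => ?_
  rw [circleIntegral.integral_smul, hf.circleIntegral_sub_inv_smul (hv i hi), smul_comm,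
    inv_smul_smul₀ two_pi_I_ne_zero, smul_eq_mul]

theorem AnalyticAt.tendsto_divDiff {ι : Type*} [DecidableEq ι] {f : ℂ → ℂ} {c : ℂ}
    (hf : AnalyticAt ℂ f c) {s : Finset ι} {m : ℕ} (hs : #s = m + 1) :
    Tendsto (fun v : ι → ℂ => divDiff s v f) (𝓝[{v | Set.InjOn v s}] fun _ => c)
      (𝓝 (iteratedDeriv m f c / m.factorial)) := by
  obtain ⟨r, hr, hfr⟩ := hf.exists_ball_analyticOnNhd
  have hR : 0 < r / 2 := half_pos hr
  have hfR : DifferentiableOn ℂ f (closedBall c (r / 2)) :=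
    hfr.differentiableOn.mono (closedBall_subset_ball (half_lt_self hr))
  have hU : {v : ι → ℂ | ∀ i ∈ s, v i ∈ ball c (r / 2)} ∈ 𝓝 fun _ => c :=
    (eventually_all_finset s).2 fun i _ =>
      (continuous_apply i).continuousAt.preimage_mem_nhds (ball_mem_nhds c hR)
  have hcont : ContinuousAt (fun v : ι → ℂ => ∮ ζ in C(c, r / 2), ((nodal s v).eval ζ)⁻¹ • f ζ)
      fun _ => c := by
    refine ContinuousOn.continuousAt ?_ hU
    refine continuousOn_circleIntegral hR.le ?_
    show ContinuousOn (fun p : (ι → ℂ) × ℂ => ((nodal s p.1).eval p.2)⁻¹ • f p.2) _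
    refine ContinuousOn.fun_smul ?_ (hfR.continuousOn.comp continuousOn_snd
      fun _ hp => sphere_subset_closedBall (Set.mem_prod.1 hp).2)
    refine ContinuousOn.inv₀ (by simp only [eval_nodal]; fun_prop) ?_
    rintro ⟨v, ζ⟩ ⟨hv, hζ⟩
    exact eval_nodal_not_at_node fun i hi => sphere_disjoint_ball.ne_of_mem hζ (hv i hi)
  have hconst : (2 * π * I)⁻¹ • ∮ ζ in C(c, r / 2), ((nodal s fun _ => c).eval ζ)⁻¹ • f ζ =
      iteratedDeriv m f c / m.factorial := by
    simp only [eval_nodal, prod_const, hs, ← one_div]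
    rw [hfR.circleIntegral_one_div_sub_center_pow_smul hR m, smul_smul, smul_eq_mul]
    field_simp
  rw [← hconst]
  refine ((hcont.tendsto.mono_left nhdsWithin_le_nhds).const_smul _).congr' ?_
  filter_upwards [mem_nhdsWithin_of_mem_nhds hU, self_mem_nhdsWithin] with v hvU hvs
  exact (divDiff_eq_circleIntegral hfR hvs (card_pos.1 (by omega)) hvU).symm

/-- Homogeneous limit of the alternant ratio: as `z → (w,…,w)` through tuples
with pairwise distinct entries, `det[φ_j(z_k)]/Δ(z) → det[φ_j^{(k−1)}(w)/(k−1)!]`, which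
equals the Wronskian `W[φ₁,…,φ_n](w)` divided by `∏_k (k−1)!`. -/
theorem alternant_homogeneous_limit (n : ℕ) (w : ℂ) (φ : Fin n → ℂ → ℂ)
    (hφ : ∀ j : Fin n, AnalyticAt ℂ (φ j) w) :
    Tendsto
      (fun z : Fin n → ℂ =>
        (Matrix.of fun j k : Fin n => φ j (z k)).det / vand z)
      (𝓝[{z : Fin n → ℂ | Function.Injective z}] (fun _ => w))
      (𝓝 ((Matrix.of fun j k : Fin n =>
        iteratedDeriv (k : ℕ) (φ j) w / (Nat.factorial (k : ℕ) : ℂ)).det))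
    ∧ (Matrix.of fun j k : Fin n => iteratedDeriv (k : ℕ) (φ j) w / (Nat.factorial (k : ℕ) : ℂ)).det
        = (Matrix.of fun j k : Fin n => iteratedDeriv (k : ℕ) (φ j) w).det
            / ∏ k ∈ Finset.range n, (Nat.factorial k : ℂ) := by
  constructor
  · simp only [det_div_vand_eq_det_divDiff]
    have hentries : Tendsto (fun z : Fin n → ℂ => Matrix.of fun j k => divDiff (Iic k) z (φ j))
        (𝓝[{z | Function.Injective z}] fun _ => w)
        (𝓝 (Matrix.of fun j k : Fin n => iteratedDeriv k (φ j) w / (k : ℕ).factorial)) :=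
      tendsto_pi_nhds.2 fun j => tendsto_pi_nhds.2 fun k =>
        ((hφ j).tendsto_divDiff (Fin.card_Iic k)).mono_left
          (nhdsWithin_mono _ fun z hz => hz.injOn)
    exact (continuous_id.matrix_det.tendsto _).comp hentries
  · have hscale := Matrix.det_mul_row (fun k : Fin n => ((k : ℕ).factorial : ℂ)⁻¹)
      (Matrix.of fun j k : Fin n => iteratedDeriv k (φ j) w)
    simp only [Matrix.of_apply, prod_inv_distrib, ← div_eq_inv_mul] at hscale
    rw [hscale, Fin.prod_univ_eq_prod_range (fun k => (k.factorial : ℂ))]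
end
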